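/- arXiv:math/9811157 — 2 statements merged into one kernel-verified Lean document; each statement's English description precedes it below -/
import Mathlib

section
/- Let A_m ⊆ Ω_{n_m} be a sequence of events with lim_{m→∞} II(A_m) = 0. Then {A_m} is asymptotically noise sensitive: for every ε ∈ (0,1/2), lim_{m→∞} φ(A_m, ε) = 0. -/
namespace BKS

open Finset Filter

variable {ι : Type} [Fintype ι] [DecidableEq ι]

/-- Probability of an event under the uniform measure on `ι → Bool`. -/
noncomputable def cprob (A : Finset (ι → Bool)) : ℝ :=
  (A.card : ℝ) / 2 ^ Fintype.card ι

/-- Expectation of a function under the uniform measure on `ι → Bool`. -/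
noncomputable def cexpect (f : (ι → Bool) → ℝ) : ℝ :=
  (∑ x : ι → Bool, f x) / 2 ^ Fintype.card ι

/-- Real-valued indicator of an event. -/
noncomputable def indE (A : Finset (ι → Bool)) : (ι → Bool) → ℝ :=
  fun x => if x ∈ A then 1 else 0

/-- Transition kernel of the ε-noise: probability that `N_ε(x) = y`. -/
noncomputable def noiseKernel (ε : ℝ) (x y : ι → Bool) : ℝ :=
  ∏ j : ι, if y j = x j then 1 - ε else ε

/-- `P(N_ε(x) ∈ A | x)`. -/
noncomputable def condProb (ε : ℝ) (A : Finset (ι → Bool)) (x : ι → Bool) : ℝ :=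
  ∑ y ∈ A, noiseKernel ε x y

/-- Sensitivity gauge φ(A, ε) = inf{δ > 0 : P{x : |P(N_ε(x) ∈ A | x) − P(A)| > δ} < δ}. -/
noncomputable def gauge (ε : ℝ) (A : Finset (ι → Bool)) : ℝ :=
  sInf {δ : ℝ | 0 < δ ∧
    cprob (@Finset.filter _ (fun x => δ < |condProb ε A x - cprob A|)
      (Classical.decPred _) Finset.univ) < δ}

/-- Flip the `k`-th bit. -/
def flipBit (k : ι) (x : ι → Bool) : ι → Bool := Function.update x k (!x k)

/-- Influence of the `k`-th variable: `I_k(f) = E|f(σ_k x) − f(x)|`. -/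
noncomputable def influence (k : ι) (f : (ι → Bool) → ℝ) : ℝ :=
  cexpect fun x => |f (flipBit k x) - f x|

/-- `I(f) = Σ_k I_k(f)`. -/
noncomputable def totalInf (f : (ι → Bool) → ℝ) : ℝ := ∑ k : ι, influence k f

/-- `II(f) = Σ_k I_k(f)²`. -/
noncomputable def sqInf (f : (ι → Bool) → ℝ) : ℝ := ∑ k : ι, (influence k f) ^ 2

/-- `II(A)` for an event `A`. -/
noncomputable def sqInfE (A : Finset (ι → Bool)) : ℝ := sqInf (indE A)

/-- A monotone (upward closed) event. -/
def MonotoneEvent (A : Finset (ι → Bool)) : Prop :=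
  ∀ x y : ι → Bool, (∀ j, x j ≤ y j) → x ∈ A → y ∈ A

/-- Fourier–Walsh coefficient `f̂(S) = E[f · u_S]`, where `u_S(x) = (−1)^{|S ∩ x|}`. -/
noncomputable def walshFourier (f : (ι → Bool) → ℝ) (S : Finset ι) : ℝ :=
  cexpect fun x => f x * (-1 : ℝ) ^ (S.filter fun j => x j = true).card

/-- `Q_ε f (x) = E[f(N_ε(x))]`. -/
noncomputable def Qop (ε : ℝ) (f : (ι → Bool) → ℝ) (x : ι → Bool) : ℝ :=
  ∑ y : ι → Bool, noiseKernel ε x y * f y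

/-- `VAR(f, ε)`: variance of `x ↦ E[f(N_ε(x)) | x]`. -/
noncomputable def VAR (ε : ℝ) (f : (ι → Bool) → ℝ) : ℝ :=
  cexpect fun x => (Qop ε f x - cexpect (Qop ε f)) ^ 2

/-- `P[A △ N_ε A]`. -/
noncomputable def probSymmDiff (ε : ℝ) (A : Finset (ι → Bool)) : ℝ :=
  cexpect fun x => ∑ y : ι → Bool, noiseKernel ε x y *
    (if (x ∈ A) ↔ (y ∈ A) then 0 else 1)

/-- `P[A \ N_ε A]`. -/
noncomputable def probOffDiff (ε : ℝ) (A : Finset (ι → Bool)) : ℝ :=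
  cexpect fun x => ∑ y : ι → Bool, noiseKernel ε x y *
    (if x ∈ A ∧ y ∉ A then 1 else 0)

/-- Majority function on the set `K`: `M_K(x) = sign(Σ_{j∈K}(2x_j − 1))`. -/
noncomputable def majority (K : Finset ι) (x : ι → Bool) : ℝ :=
  Real.sign (∑ j ∈ K, (2 * (if x j then (1:ℝ) else 0) - 1))

/-- Weighted majority function `M_w(x) = sign(Σ_j (2x_j − 1) w_j)`. -/
noncomputable def wMajority (w : ι → ℝ) (x : ι → Bool) : ℝ :=
  Real.sign (∑ j : ι, (2 * (if x j then (1:ℝ) else 0) - 1) * w j)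

/-- The discrete cube Ω_n = {0,1}^n. -/
abbrev Cube (n : ℕ) := Fin n → Bool

end BKS

/-!
In the Walsh basis `u_S(x) = ∏_{j ∈ S} (-1)^{x_j}` the noise operator is diagonal,
`Q_ε u_S = (1 - 2ε)^{|S|} u_S`, so
`𝔼 (P(N_ε(x) ∈ A | x) - P(A))² = ∑_{S ≠ ∅} (1 - 2ε)^{2|S|} Â(S)²`, and by Chebyshev's inequality
it suffices to make this small. Cutting at level `k` bounds it by
`3^k ∑_{S ≠ ∅} 3^{-|S|} Â(S)² + (1 - 2ε)^{2k}`.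

To control the weighted sum, split `1_A - P(A)` into martingale differences `d_i`, the parts of
its expansion on the sets with largest element `i`. Each `d_i` is an average of
`(1_A - 1_A ∘ σ_i) / 2`, so `‖d_i‖₁ ≤ I_i(A) / 2`. Bonami's inequality `‖T_ρ g‖₄ ≤ ‖g‖₂` for
`ρ² ≤ 1/3` and Hölder's inequality give
`∑_S 3^{-|S|} d̂_i(S)² ≤ ‖d_i‖₁^{1/2} ‖d_i‖₂^{3/2}`, and Hölder's inequality over `i`, with
`∑_i ‖d_i‖₂² ≤ 1`, yields `∑_{S ≠ ∅} 3^{-|S|} Â(S)² ≤ (II(A) / 4)^{1/4}`.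
-/

namespace BKS

open Finset Filter
open scoped BigOperators

lemma expect_abs_mul_abs_pow_four_le {α : Type*} [Fintype α] (d u : α → ℝ) :
    (𝔼 x, |d x| * |u x|) ^ 4 ≤ (𝔼 x, |d x|) ^ 2 * (𝔼 x, d x ^ 2) * 𝔼 x, u x ^ 4 := by
  have h₁ := expect_mul_sq_le_sq_mul_sq univ (fun x => √|d x|) (fun x => √|d x| * |u x|)
  simp only [← mul_assoc, Real.mul_self_sqrt, Real.sq_sqrt, abs_nonneg, mul_pow, sq_abs] at h₁
  have h₂ := expect_mul_sq_le_sq_mul_sq univ (fun x => |d x|) (fun x => u x ^ 2)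
  simp only [sq_abs, ← pow_mul] at h₂
  calc (𝔼 x, |d x| * |u x|) ^ 4 = ((𝔼 x, |d x| * |u x|) ^ 2) ^ 2 := by ring
    _ ≤ ((𝔼 x, |d x|) * 𝔼 x, |d x| * u x ^ 2) ^ 2 := pow_le_pow_left₀ (sq_nonneg _) h₁ 2
    _ = (𝔼 x, |d x|) ^ 2 * (𝔼 x, |d x| * u x ^ 2) ^ 2 := by ring
    _ ≤ (𝔼 x, |d x|) ^ 2 * ((𝔼 x, d x ^ 2) * 𝔼 x, u x ^ 4) :=
        mul_le_mul_of_nonneg_left h₂ (sq_nonneg _)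
    _ = _ := by ring

lemma sum_pow_four_le_of_pow_four_le {κ : Type*} (s : Finset κ) {v a b : κ → ℝ}
    (ha : ∀ i, 0 ≤ a i) (hb : ∀ i, 0 ≤ b i) (h : ∀ i, v i ^ 4 ≤ a i ^ 2 * b i ^ 3) :
    (∑ i ∈ s, v i) ^ 4 ≤ (∑ i ∈ s, a i ^ 2) * (∑ i ∈ s, b i) ^ 3 := by
  have hpow {a b : ℝ} (ha : 0 ≤ a) (hb : 0 ≤ b) : (√(a * √b) * √b) ^ 4 = a ^ 2 * b ^ 3 := by
    have h₁ := Real.sq_sqrt (mul_nonneg ha (Real.sqrt_nonneg b))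
    have h₂ := Real.sq_sqrt hb
    calc (√(a * √b) * √b) ^ 4 = (√(a * √b) ^ 2) ^ 2 * (√b ^ 2) ^ 2 := by ring
      _ = a ^ 2 * b ^ 3 := by rw [h₁, mul_pow, h₂]; ring
  have h4 : Even 4 := by decide
  set A := ∑ i ∈ s, a i ^ 2
  set B := ∑ i ∈ s, b i
  have hA : 0 ≤ A := sum_nonneg fun i _ => sq_nonneg (a i)
  have hB : 0 ≤ B := sum_nonneg fun i _ => hb i
  have hv (i : κ) : |v i| ≤ √(a i * √(b i)) * √(b i) := by
    refine le_of_pow_le_pow_left₀ four_ne_zero (by positivity) ?_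
    rw [h4.pow_abs, hpow (ha i) (hb i)]
    exact h i
  have hab : ∑ i ∈ s, a i * √(b i) ≤ √A * √B := by
    convert Real.sum_sqrt_mul_sqrt_le s (fun i => sq_nonneg (a i)) hb using 2 with i
    rw [Real.sqrt_sq (ha i)]
  have hsum : |∑ i ∈ s, v i| ≤ √(√A * √B) * √B :=
    calc |∑ i ∈ s, v i| ≤ ∑ i ∈ s, √(a i * √(b i)) * √(b i) :=
          (abs_sum_le_sum_abs _ _).trans (sum_le_sum fun i _ => hv i)
      _ ≤ √(∑ i ∈ s, a i * √(b i)) * √B :=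
          Real.sum_sqrt_mul_sqrt_le s (fun i => mul_nonneg (ha i) (Real.sqrt_nonneg _)) hb
      _ ≤ √(√A * √B) * √B := by gcongr
  have := pow_le_pow_left₀ (abs_nonneg _) hsum 4
  rwa [h4.pow_abs, hpow (Real.sqrt_nonneg A) hB, Real.sq_sqrt hA] at this

noncomputable def spin (b : Bool) : ℝ := if b then -1 else 1

lemma spin_not (b : Bool) : spin (!b) = -spin b := by cases b <;> simp [spin]

lemma spin_mul_self (b : Bool) : spin b * spin b = 1 := by cases b <;> simp [spin]

section Walsh

variable {ι : Type}

noncomputable def walsh (S : Finset ι) (x : ι → Bool) : ℝ := ∏ j ∈ S, spin (x j)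

@[simp]
lemma walsh_empty (x : ι → Bool) : walsh ∅ x = 1 := prod_empty

lemma sum_walsh_mul_walsh [Fintype ι] (x y : ι → Bool) :
    ∑ S, walsh S x * walsh S y = if x = y then 2 ^ Fintype.card ι else 0 := by
  have h : ∀ j, 1 + spin (x j) * spin (y j) = if x j = y j then 2 else 0 := by
    intro j; cases x j <;> cases y j <;> norm_num [spin]
  simp only [walsh, ← prod_mul_distrib]
  rw [← powerset_univ, ← prod_one_add]
  simp only [h, prod_ite_zero, mem_univ, true_implies, prod_const, card_univ, funext_iff]

variable [DecidableEq ι]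

lemma flipBit_involutive (i : ι) : Function.Involutive (flipBit i : (ι → Bool) → ι → Bool) :=
  fun x => by simp [flipBit]

lemma flipBit_apply_self (i : ι) (x : ι → Bool) : flipBit i x i = !x i :=
  Function.update_self _ _ _

lemma flipBit_apply_of_ne {i j : ι} (h : j ≠ i) (x : ι → Bool) : flipBit i x j = x j :=
  Function.update_of_ne h _ _

lemma walsh_insert {i : ι} {S : Finset ι} (hi : i ∉ S) (x : ι → Bool) :
    walsh (insert i S) x = spin (x i) * walsh S x :=
  prod_insert hi

lemma walsh_flipBit_of_notMem {i : ι} {S : Finset ι} (hi : i ∉ S) (x : ι → Bool) :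
    walsh S (flipBit i x) = walsh S x :=
  prod_congr rfl fun j hj => by rw [flipBit_apply_of_ne (ne_of_mem_of_not_mem hj hi)]

lemma walsh_flipBit (i : ι) (S : Finset ι) (x : ι → Bool) :
    walsh S (flipBit i x) = (if i ∈ S then -1 else 1) * walsh S x := by
  by_cases hi : i ∈ S
  · rw [← insert_erase hi, walsh_insert (notMem_erase i S), walsh_insert (notMem_erase i S),
      walsh_flipBit_of_notMem (notMem_erase i S), flipBit_apply_self, spin_not,
      if_pos (mem_insert_self i _)]
    ring
  · rw [walsh_flipBit_of_notMem hi, if_neg hi, one_mul]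

lemma walsh_piecewise (S U : Finset ι) (x y : ι → Bool) :
    walsh S (U.piecewise x y) = walsh (S ∩ U) x * walsh (S \ U) y := by
  rw [walsh, ← prod_inter_mul_prod_sdiff S U]
  congr 1
  · exact prod_congr rfl fun j hj => by rw [piecewise_eq_of_mem _ _ _ (mem_inter.1 hj).2]
  · exact prod_congr rfl fun j hj => by rw [piecewise_eq_of_notMem _ _ _ (mem_sdiff.1 hj).2]

variable [Fintype ι]

lemma walsh_eq_prod_univ (S : Finset ι) (x : ι → Bool) :
    walsh S x = ∏ j, if j ∈ S then spin (x j) else 1 := by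
  rw [prod_ite_mem, univ_inter, walsh]

lemma walsh_mul_walsh (S T : Finset ι) (x : ι → Bool) :
    walsh S x * walsh T x = walsh (symmDiff S T) x := by
  simp only [walsh_eq_prod_univ, ← prod_mul_distrib]
  refine prod_congr rfl fun j _ => ?_
  by_cases hS : j ∈ S <;> by_cases hT : j ∈ T <;> simp [hS, hT, mem_symmDiff, spin_mul_self]

end Walsh

variable {ι : Type} [Fintype ι] [DecidableEq ι]

lemma cexpect_eq_expect (f : (ι → Bool) → ℝ) : cexpect f = 𝔼 x, f x := by
  simp [cexpect, Fintype.expect_eq_sum_div_card]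

lemma expect_comp_flipBit (i : ι) (g : (ι → Bool) → ℝ) :
    𝔼 x, g (flipBit i x) = 𝔼 x, g x :=
  Fintype.expect_bijective _ (flipBit_involutive i).bijective _ _ fun _ => rfl

lemma expect_spin_mul_eq_zero (i : ι) {g : (ι → Bool) → ℝ} (hg : ∀ x, g (flipBit i x) = g x) :
    𝔼 x, spin (x i) * g x = 0 := by
  have h := expect_comp_flipBit i fun x => spin (x i) * g x
  simp only [flipBit_apply_self, spin_not, hg, neg_mul, expect_neg_distrib] at h
  linarith

lemma expect_walsh (S : Finset ι) : 𝔼 x, walsh S x = if S = ∅ then 1 else 0 := by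
  split_ifs with hS
  · simp [hS]
  · obtain ⟨i, hi⟩ := nonempty_iff_ne_empty.2 hS
    have h := expect_comp_flipBit i (walsh S)
    simp only [walsh_flipBit, if_pos hi, neg_one_mul, expect_neg_distrib] at h
    linarith

lemma expect_walsh_mul_walsh (S T : Finset ι) :
    𝔼 x, walsh S x * walsh T x = if S = T then 1 else 0 := by
  simp only [walsh_mul_walsh, expect_walsh, ← bot_eq_empty, symmDiff_eq_bot]

lemma walshFourier_eq_expect (f : (ι → Bool) → ℝ) (S : Finset ι) :
    walshFourier f S = 𝔼 x, f x * walsh S x := by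
  rw [walshFourier, cexpect_eq_expect]
  refine expect_congr rfl fun x _ => ?_
  rw [walsh, card_filter, ← prod_pow_eq_pow_sum]
  congr 1
  exact prod_congr rfl fun j _ => by cases x j <;> simp [spin]

noncomputable def walshSum (c : Finset ι → ℝ) (x : ι → Bool) : ℝ := ∑ S, c S * walsh S x

lemma expect_walshSum_mul_walsh (c : Finset ι → ℝ) (T : Finset ι) :
    𝔼 x, walshSum c x * walsh T x = c T := by
  simp only [walshSum, sum_mul, expect_sum_comm, mul_assoc, ← mul_expect, expect_walsh_mul_walsh,
    mul_ite, mul_one, mul_zero, sum_ite_eq', mem_univ, if_true]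

lemma expect_walshSum (c : Finset ι → ℝ) : 𝔼 x, walshSum c x = c ∅ := by
  simpa using expect_walshSum_mul_walsh c ∅

lemma expect_walshSum_mul_walshSum (c c' : Finset ι → ℝ) :
    𝔼 x, walshSum c x * walshSum c' x = ∑ S, c S * c' S := by
  simp only [walshSum, sum_mul, mul_sum, expect_sum_comm, mul_mul_mul_comm _ (walsh _ _),
    ← mul_expect, expect_walsh_mul_walsh, mul_ite, mul_one, mul_zero, sum_ite_eq', mem_univ,
    if_true]

lemma walshSum_walshFourier (f : (ι → Bool) → ℝ) : walshSum (walshFourier f) = f := by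
  ext x
  simp only [walshSum, walshFourier_eq_expect, expect_mul, mul_assoc, ← expect_sum_comm,
    ← mul_sum, sum_walsh_mul_walsh, mul_ite, mul_zero]
  rw [Fintype.expect_eq_sum_div_card, sum_ite_eq']
  simp

lemma expect_sq_eq_sum_walshFourier_sq (f : (ι → Bool) → ℝ) :
    𝔼 x, f x ^ 2 = ∑ S, walshFourier f S ^ 2 := by
  conv_lhs => rw [← walshSum_walshFourier f]
  simp only [sq, expect_walshSum_mul_walshSum]

lemma expect_sq_walshSum_sub (c : Finset ι → ℝ) :
    𝔼 x, (walshSum c x - c ∅) ^ 2 = ∑ S with S.Nonempty, c S ^ 2 := by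
  have hsplit : ∀ x (S : Finset ι), (if S.Nonempty then c S else 0) * walsh S x
      = c S * walsh S x - if S = ∅ then c ∅ else 0 := by
    intro x S
    rcases S.eq_empty_or_nonempty with rfl | hS
    · simp
    · simp [hS, hS.ne_empty]
  have h : ∀ x, walshSum c x - c ∅ = walshSum (fun S => if S.Nonempty then c S else 0) x := by
    intro x
    simp only [walshSum, hsplit, sum_sub_distrib, sum_ite_eq', mem_univ, if_true]
  simp only [h, sq, expect_walshSum_mul_walshSum, sum_filter, ite_zero_mul_ite_zero, and_self]

lemma sum_noiseKernel_mul_walsh (ε : ℝ) (x : ι → Bool) (S : Finset ι) :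
    ∑ y, noiseKernel ε x y * walsh S y = (1 - 2 * ε) ^ #S * walsh S x := by
  have hfactor : ∀ j, ∑ b, (if b = x j then 1 - ε else ε) * (if j ∈ S then spin b else 1)
      = if j ∈ S then (1 - 2 * ε) * spin (x j) else 1 := by
    intro j
    by_cases hj : j ∈ S <;> cases x j <;>
      simp only [Fintype.sum_bool, hj, spin, Bool.true_eq_false, Bool.false_eq_true,
        ↓reduceIte] <;> ring
  have hexpand := prod_univ_sum (fun _ : ι => (univ : Finset Bool))
    fun j b => (if b = x j then 1 - ε else ε) * (if j ∈ S then spin b else 1)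
  rw [Fintype.piFinset_univ] at hexpand
  simp only [noiseKernel, walsh_eq_prod_univ, ← prod_mul_distrib, ← hexpand, hfactor]
  simp only [prod_ite_mem, univ_inter, prod_mul_distrib, prod_const]

lemma Qop_eq_walshSum (ε : ℝ) (f : (ι → Bool) → ℝ) :
    Qop ε f = walshSum fun S => (1 - 2 * ε) ^ #S * walshFourier f S := by
  ext x
  calc Qop ε f x = ∑ y, noiseKernel ε x y * walshSum (walshFourier f) y := by
        rw [walshSum_walshFourier, Qop]
    _ = ∑ S, walshFourier f S * ∑ y, noiseKernel ε x y * walsh S y := by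
        simp only [walshSum, mul_sum]
        rw [sum_comm]
        exact sum_congr rfl fun S _ => sum_congr rfl fun y _ => by ring
    _ = _ := by
        simp only [sum_noiseKernel_mul_walsh, walshSum]
        exact sum_congr rfl fun S _ => by ring

lemma condProb_eq_Qop (ε : ℝ) (A : Finset (ι → Bool)) : condProb ε A = Qop ε (indE A) := by
  ext x
  simp [condProb, Qop, indE]

lemma cprob_eq_expect_indE (A : Finset (ι → Bool)) : cprob A = 𝔼 x, indE A x := by
  rw [← cexpect_eq_expect]
  simp [cprob, cexpect, indE]

lemma cprob_eq_walshFourier_empty (A : Finset (ι → Bool)) : cprob A = walshFourier (indE A) ∅ := by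
  simp [walshFourier_eq_expect, cprob_eq_expect_indE]

lemma expect_sq_condProb_sub_cprob (ε : ℝ) (A : Finset (ι → Bool)) :
    𝔼 x, (condProb ε A x - cprob A) ^ 2
      = ∑ S with S.Nonempty, ((1 - 2 * ε) ^ 2) ^ #S * walshFourier (indE A) S ^ 2 := by
  have h := expect_sq_walshSum_sub fun S => (1 - 2 * ε) ^ #S * walshFourier (indE A) S
  simp only [card_empty, pow_zero, one_mul] at h
  rw [condProb_eq_Qop, Qop_eq_walshSum, cprob_eq_walshFourier_empty, h]
  exact sum_congr rfl fun S _ => by rw [mul_pow, ← pow_mul, ← pow_mul, Nat.mul_comm]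

lemma expect_add_spin_mul_pow_four (i : ι) {a b : (ι → Bool) → ℝ}
    (ha : ∀ x, a (flipBit i x) = a x) (hb : ∀ x, b (flipBit i x) = b x) :
    𝔼 x, (a x + spin (x i) * b x) ^ 4
      = 𝔼 x, a x ^ 4 + 6 * 𝔼 x, a x ^ 2 * b x ^ 2 + 𝔼 x, b x ^ 4 := by
  have hpoint : ∀ x, (a x + spin (x i) * b x) ^ 4 = a x ^ 4 + 6 * (a x ^ 2 * b x ^ 2) + b x ^ 4
      + spin (x i) * (4 * a x ^ 3 * b x + 4 * a x * b x ^ 3) := by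
    intro x
    linear_combination (6 * a x ^ 2 * b x ^ 2 + 4 * a x * b x ^ 3 * spin (x i)
      + b x ^ 4 * (spin (x i) ^ 2 + 1)) * spin_mul_self (x i)
  have hodd : 𝔼 x, spin (x i) * (4 * a x ^ 3 * b x + 4 * a x * b x ^ 3) = 0 :=
    expect_spin_mul_eq_zero i fun x => by rw [ha, hb]
  simp only [hpoint, expect_add_distrib, hodd, add_zero, mul_expect]

theorem expect_sum_powerset_pow_four_le {ρ : ℝ} (hρ : ρ ^ 2 ≤ 1 / 3) (s : Finset ι)
    (c : Finset ι → ℝ) :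
    𝔼 x, (∑ S ∈ s.powerset, ρ ^ #S * c S * walsh S x) ^ 4 ≤ (∑ S ∈ s.powerset, c S ^ 2) ^ 2 := by
  induction s using Finset.induction_on generalizing c with
  | empty => simp [← pow_mul]
  | insert i t hi ih =>
    have hiS : ∀ S ∈ t.powerset, i ∉ S := fun S hS h => hi (mem_powerset.1 hS h)
    set a : (ι → Bool) → ℝ := fun x => ∑ S ∈ t.powerset, ρ ^ #S * c S * walsh S x
    set b : (ι → Bool) → ℝ := fun x => ∑ S ∈ t.powerset, ρ ^ #S * c (insert i S) * walsh S x
    have hinv (d : Finset ι → ℝ) (x : ι → Bool) :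
        ∑ S ∈ t.powerset, d S * walsh S (flipBit i x) = ∑ S ∈ t.powerset, d S * walsh S x :=
      sum_congr rfl fun S hS => by rw [walsh_flipBit_of_notMem (hiS S hS)]
    have hsplit (x : ι → Bool) :
        ∑ S ∈ (insert i t).powerset, ρ ^ #S * c S * walsh S x = a x + spin (x i) * (ρ * b x) := by
      rw [sum_powerset_insert hi, mul_sum, mul_sum]
      refine congrArg _ (sum_congr rfl fun S hS => ?_)
      rw [card_insert_of_notMem (hiS S hS), walsh_insert (hiS S hS), pow_succ]
      ring
    set α := ∑ S ∈ t.powerset, c S ^ 2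
    set β := ∑ S ∈ t.powerset, c (insert i S) ^ 2
    have hα : 0 ≤ α := sum_nonneg fun _ _ => sq_nonneg _
    have hβ : 0 ≤ β := sum_nonneg fun _ _ => sq_nonneg _
    have ha4 : 𝔼 x, a x ^ 4 ≤ α ^ 2 := ih c
    have hb4 : 𝔼 x, b x ^ 4 ≤ β ^ 2 := ih fun S => c (insert i S)
    have hb4' : 0 ≤ 𝔼 x, b x ^ 4 := expect_nonneg fun _ _ => by positivity
    have hab : 𝔼 x, a x ^ 2 * b x ^ 2 ≤ α * β := by
      refine le_of_pow_le_pow_left₀ two_ne_zero (mul_nonneg hα hβ) ?_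
      calc (𝔼 x, a x ^ 2 * b x ^ 2) ^ 2 ≤ (𝔼 x, (a x ^ 2) ^ 2) * 𝔼 x, (b x ^ 2) ^ 2 :=
            expect_mul_sq_le_sq_mul_sq _ _ _
        _ ≤ α ^ 2 * β ^ 2 := by
            simp only [← pow_mul]
            exact mul_le_mul ha4 hb4 hb4' (sq_nonneg α)
        _ = (α * β) ^ 2 := by ring
    have hcross : 𝔼 x, a x ^ 2 * (ρ * b x) ^ 2 = ρ ^ 2 * 𝔼 x, a x ^ 2 * b x ^ 2 := by
      simp only [mul_pow, mul_left_comm _ (ρ ^ 2), ← mul_expect]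
    have hfour : 𝔼 x, (ρ * b x) ^ 4 = ρ ^ 4 * 𝔼 x, b x ^ 4 := by
      simp only [mul_pow, ← mul_expect]
    simp only [hsplit]
    rw [expect_add_spin_mul_pow_four i (hinv _) fun x => congrArg (ρ * ·) (hinv _ x), hcross, hfour,
      sum_powerset_insert hi]
    change _ ≤ (α + β) ^ 2
    have hmid : 6 * (ρ ^ 2 * 𝔼 x, a x ^ 2 * b x ^ 2) ≤ 2 * (α * β) := by
      have : 0 ≤ 𝔼 x, a x ^ 2 * b x ^ 2 := expect_nonneg fun _ _ => by positivity
      nlinarith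
    have hlast : ρ ^ 4 * 𝔼 x, b x ^ 4 ≤ β ^ 2 :=
      (mul_le_mul (by nlinarith) hb4 hb4' zero_le_one).trans_eq (one_mul _)
    linarith

-- Bonami's hypercontractive inequality `‖T_ρ f‖₄ ≤ ‖f‖₂`.
theorem expect_walshSum_pow_four_le {ρ : ℝ} (hρ : ρ ^ 2 ≤ 1 / 3) (c : Finset ι → ℝ) :
    𝔼 x, walshSum (fun S => ρ ^ #S * c S) x ^ 4 ≤ (∑ S, c S ^ 2) ^ 2 := by
  simpa [walshSum, powerset_univ] using expect_sum_powerset_pow_four_le hρ univ c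

-- The left side is `𝔼[d · T d]` for `d = walshSum c` and `T = T_ρ²` with `ρ = 1/√3`; Hölder's
-- inequality and Bonami's inequality for `T d` bound it.
lemma sum_inv_three_pow_mul_sq_pow_four_le (c : Finset ι → ℝ) :
    (∑ S, (3⁻¹ : ℝ) ^ #S * c S ^ 2) ^ 4 ≤ (𝔼 x, |walshSum c x|) ^ 2 * (∑ S, c S ^ 2) ^ 3 := by
  set ρ := √(3⁻¹ : ℝ)
  have hρ : ρ ^ 2 = 3⁻¹ := Real.sq_sqrt (by norm_num)
  set u := walshSum fun S => (3⁻¹ : ℝ) ^ #S * c S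
  have hu : u = walshSum fun S => ρ ^ #S * (ρ ^ #S * c S) :=
    congrArg walshSum (funext fun S => by rw [← mul_assoc, ← mul_pow, ← sq, hρ])
  have hu4 : 𝔼 x, u x ^ 4 ≤ (∑ S, c S ^ 2) ^ 2 := by
    rw [hu]
    refine (expect_walshSum_pow_four_le (by rw [hρ]; norm_num) _).trans ?_
    refine pow_le_pow_left₀ (sum_nonneg fun _ _ => sq_nonneg _) (sum_le_sum fun S _ => ?_) 2
    rw [mul_pow, ← pow_mul, pow_mul', hρ]
    exact mul_le_of_le_one_left (sq_nonneg _) (pow_le_one₀ (by norm_num) (by norm_num))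
  have hv : ∑ S, (3⁻¹ : ℝ) ^ #S * c S ^ 2 = 𝔼 x, walshSum c x * u x := by
    rw [expect_walshSum_mul_walshSum]
    exact sum_congr rfl fun S _ => by ring
  have hd2 : 𝔼 x, walshSum c x ^ 2 = ∑ S, c S ^ 2 := by
    simp only [sq, expect_walshSum_mul_walshSum]
  have hv0 : 0 ≤ ∑ S, (3⁻¹ : ℝ) ^ #S * c S ^ 2 := sum_nonneg fun _ _ => by positivity
  calc (∑ S, (3⁻¹ : ℝ) ^ #S * c S ^ 2) ^ 4 ≤ (𝔼 x, |walshSum c x| * |u x|) ^ 4 := by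
        refine pow_le_pow_left₀ hv0 ?_ 4
        rw [hv]
        exact expect_le_expect fun x _ => (le_abs_self _).trans (abs_mul _ _).le
    _ ≤ (𝔼 x, |walshSum c x|) ^ 2 * (𝔼 x, walshSum c x ^ 2) * 𝔼 x, u x ^ 4 :=
        expect_abs_mul_abs_pow_four_le _ _
    _ ≤ (𝔼 x, |walshSum c x|) ^ 2 * (∑ S, c S ^ 2) * (∑ S, c S ^ 2) ^ 2 := by
        rw [hd2]
        exact mul_le_mul_of_nonneg_left hu4 (by positivity)
    _ = _ := by ring

noncomputable def condAvg (U : Finset ι) (f : (ι → Bool) → ℝ) (x : ι → Bool) : ℝ :=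
  𝔼 y, f (U.piecewise x y)

lemma condAvg_walshSum (U : Finset ι) (c : Finset ι → ℝ) :
    condAvg U (walshSum c) = walshSum fun S => if S ⊆ U then c S else 0 := by
  ext x
  simp only [condAvg, walshSum, walsh_piecewise, expect_sum_comm, ← mul_assoc, ← mul_expect,
    expect_walsh, sdiff_eq_empty_iff_subset]
  refine sum_congr rfl fun S _ => ?_
  split_ifs with h
  · rw [inter_eq_left.2 h, mul_one]
  · simp

lemma expect_condAvg (U : Finset ι) (f : (ι → Bool) → ℝ) :
    𝔼 x, condAvg U f x = 𝔼 x, f x := by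
  rw [← walshSum_walshFourier f, condAvg_walshSum, expect_walshSum, expect_walshSum,
    if_pos (empty_subset U)]

lemma expect_abs_condAvg_le (U : Finset ι) (f : (ι → Bool) → ℝ) :
    𝔼 x, |condAvg U f x| ≤ 𝔼 x, |f x| :=
  calc 𝔼 x, |condAvg U f x| ≤ 𝔼 x, condAvg U (fun z => |f z|) x :=
        expect_le_expect fun _ _ => abs_expect_le _ _
    _ = 𝔼 x, |f x| := expect_condAvg U _

lemma half_sub_comp_flipBit_eq_walshSum (f : (ι → Bool) → ℝ) (i : ι) :
    (fun x => (f x - f (flipBit i x)) / 2)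
      = walshSum fun S => if i ∈ S then walshFourier f S else 0 := by
  ext x
  conv_lhs => rw [← walshSum_walshFourier f]
  simp only [walshSum, walsh_flipBit, ← sum_sub_distrib, sum_div]
  refine sum_congr rfl fun S _ => ?_
  split_ifs <;> ring

section LinearOrder

variable [LinearOrder ι]

-- `𝔼[f | x_j, j ≤ i] - 𝔼[f | x_j, j < i]`, written so that its `L¹` bound by `I_i(f) / 2` is
-- immediate.
noncomputable def martingaleDiff (f : (ι → Bool) → ℝ) (i : ι) : (ι → Bool) → ℝ :=
  condAvg ({j | j ≤ i} : Finset ι) fun x => (f x - f (flipBit i x)) / 2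

lemma martingaleDiff_eq_walshSum (f : (ι → Bool) → ℝ) (i : ι) :
    martingaleDiff f i = walshSum fun S => if S.max = i then walshFourier f S else 0 := by
  rw [martingaleDiff, half_sub_comp_flipBit_eq_walshSum, condAvg_walshSum]
  refine congrArg walshSum (funext fun S => ?_)
  rw [← ite_and]
  refine if_congr ⟨fun ⟨hS, hi⟩ => le_antisymm ?_ (le_max hi),
    fun h => ⟨fun j hj => mem_filter.2 ⟨mem_univ j, le_max_of_eq hj h⟩, mem_of_max h⟩⟩ rfl rfl
  exact Finset.max_le fun j hj => WithBot.coe_le_coe.2 (mem_filter.1 (hS hj)).2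

lemma expect_abs_martingaleDiff_le (f : (ι → Bool) → ℝ) (i : ι) :
    𝔼 x, |martingaleDiff f i x| ≤ influence i f / 2 := by
  refine (expect_abs_condAvg_le _ _).trans_eq ?_
  rw [influence, cexpect_eq_expect, expect_div]
  refine expect_congr rfl fun x _ => ?_
  rw [abs_div, abs_two, abs_sub_comm]

lemma sum_sum_filter_max_eq (g : Finset ι → ℝ) :
    ∑ i : ι, ∑ S with S.max = (i : WithBot ι), g S = ∑ S with S.Nonempty, g S := by
  simp only [sum_filter]
  rw [sum_comm]
  refine sum_congr rfl fun S _ => ?_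
  rcases S.eq_empty_or_nonempty with rfl | hS
  · exact sum_eq_zero fun i _ => if_neg (by simp)
  · simp only [if_pos hS, ← coe_max' hS, WithBot.coe_inj, sum_ite_eq, mem_univ, if_true]

theorem sum_inv_three_pow_mul_walshFourier_sq_pow_four_le (f : (ι → Bool) → ℝ) :
    (∑ S with S.Nonempty, (3⁻¹ : ℝ) ^ #S * walshFourier f S ^ 2) ^ 4
      ≤ sqInf f / 4 * (∑ S with S.Nonempty, walshFourier f S ^ 2) ^ 3 := by
  set c : ι → Finset ι → ℝ := fun i S => if S.max = i then walshFourier f S else 0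
  have hfiber (g : ℝ → Finset ι → ℝ) (hg : ∀ S, g 0 S = 0) :
      ∑ S with S.Nonempty, g (walshFourier f S) S = ∑ i, ∑ S, g (c i S) S := by
    rw [← sum_sum_filter_max_eq fun S => g (walshFourier f S) S]
    refine sum_congr rfl fun i _ => ?_
    rw [sum_filter]
    exact sum_congr rfl fun S _ => by split_ifs <;> simp [c, *]
  rw [hfiber (fun t S => (3⁻¹ : ℝ) ^ #S * t ^ 2) (by simp), hfiber (fun t _ => t ^ 2) (by simp)]
  have hinf : ∑ i, (𝔼 x, |walshSum (c i) x|) ^ 2 ≤ sqInf f / 4 := by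
    rw [sqInf, sum_div]
    refine sum_le_sum fun i _ => ?_
    rw [← martingaleDiff_eq_walshSum]
    calc (𝔼 x, |martingaleDiff f i x|) ^ 2 ≤ (influence i f / 2) ^ 2 :=
          pow_le_pow_left₀ (expect_nonneg fun _ _ => abs_nonneg _)
            (expect_abs_martingaleDiff_le f i) 2
      _ = influence i f ^ 2 / 4 := by ring
  refine (sum_pow_four_le_of_pow_four_le univ (fun i => expect_nonneg fun _ _ => abs_nonneg _)
    (fun i => sum_nonneg fun _ _ => sq_nonneg _)
    fun i => sum_inv_three_pow_mul_sq_pow_four_le (c i)).trans ?_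
  exact mul_le_mul_of_nonneg_right hinf (pow_nonneg (sum_nonneg fun _ _ =>
    sum_nonneg fun _ _ => sq_nonneg _) 3)

end LinearOrder

lemma sum_nonempty_walshFourier_indE_sq_le_one (A : Finset (ι → Bool)) :
    ∑ S with S.Nonempty, walshFourier (indE A) S ^ 2 ≤ 1 := by
  refine (sum_le_sum_of_subset_of_nonneg (filter_subset _ _) fun _ _ _ => sq_nonneg _).trans ?_
  rw [← expect_sq_eq_sum_walshFourier_sq]
  exact expect_le univ_nonempty fun x _ => by by_cases hx : x ∈ A <;> simp [indE, hx]

lemma sum_inv_three_pow_mul_walshFourier_indE_sq_le [LinearOrder ι] (A : Finset (ι → Bool)) :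
    ∑ S with S.Nonempty, (3⁻¹ : ℝ) ^ #S * walshFourier (indE A) S ^ 2 ≤ √√(sqInfE A / 4) := by
  set V := ∑ S with S.Nonempty, (3⁻¹ : ℝ) ^ #S * walshFourier (indE A) S ^ 2
  set B := ∑ S with S.Nonempty, walshFourier (indE A) S ^ 2
  have hV : 0 ≤ V := sum_nonneg fun _ _ => by positivity
  have hB₀ : 0 ≤ B := sum_nonneg fun _ _ => sq_nonneg _
  have hB₁ : B ≤ 1 := sum_nonempty_walshFourier_indE_sq_le_one A
  have hinf : 0 ≤ sqInfE A / 4 := div_nonneg (sum_nonneg fun _ _ => sq_nonneg _) zero_le_four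
  have h4 : (V ^ 2) ^ 2 ≤ sqInfE A / 4 := by
    rw [← pow_mul]
    refine (sum_inv_three_pow_mul_walshFourier_sq_pow_four_le (indE A)).trans ?_
    exact mul_le_of_le_one_right hinf (pow_le_one₀ hB₀ hB₁)
  calc V = √√((V ^ 2) ^ 2) := by rw [Real.sqrt_sq (sq_nonneg V), Real.sqrt_sq hV]
    _ ≤ √√(sqInfE A / 4) := Real.sqrt_le_sqrt (Real.sqrt_le_sqrt h4)

lemma pow_le_three_pow_mul_add_pow {r : ℝ} (hr₀ : 0 ≤ r) (hr₁ : r ≤ 1) (n k : ℕ) :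
    r ^ n ≤ 3 ^ k * 3⁻¹ ^ n + r ^ k := by
  rcases le_total n k with hnk | hkn
  · have : (1 : ℝ) ≤ 3 ^ k * 3⁻¹ ^ n := by
      rw [inv_pow, ← div_eq_mul_inv, one_le_div (by positivity)]
      exact pow_le_pow_right₀ (by norm_num) hnk
    linarith [pow_le_one₀ hr₀ hr₁ (n := n), pow_nonneg hr₀ k]
  · have : (0 : ℝ) ≤ 3 ^ k * 3⁻¹ ^ n := by positivity
    linarith [pow_le_pow_of_le_one hr₀ hr₁ hkn]

lemma expect_sq_condProb_sub_cprob_le [LinearOrder ι] {ε : ℝ} (hε₀ : 0 ≤ ε) (hε₁ : ε ≤ 1)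
    (A : Finset (ι → Bool)) (k : ℕ) :
    𝔼 x, (condProb ε A x - cprob A) ^ 2 ≤ 3 ^ k * √√(sqInfE A / 4) + ((1 - 2 * ε) ^ 2) ^ k := by
  set r := (1 - 2 * ε) ^ 2
  have hr₀ : 0 ≤ r := sq_nonneg _
  have hr₁ : r ≤ 1 := by nlinarith
  rw [expect_sq_condProb_sub_cprob]
  calc ∑ S with S.Nonempty, r ^ #S * walshFourier (indE A) S ^ 2
      ≤ ∑ S with S.Nonempty, (3 ^ k * 3⁻¹ ^ #S + r ^ k) * walshFourier (indE A) S ^ 2 :=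
        sum_le_sum fun S _ => mul_le_mul_of_nonneg_right
          (pow_le_three_pow_mul_add_pow hr₀ hr₁ _ k) (sq_nonneg _)
    _ = 3 ^ k * ∑ S with S.Nonempty, (3⁻¹ : ℝ) ^ #S * walshFourier (indE A) S ^ 2
          + r ^ k * ∑ S with S.Nonempty, walshFourier (indE A) S ^ 2 := by
        simp only [mul_sum, ← sum_add_distrib]
        exact sum_congr rfl fun S _ => by ring
    _ ≤ 3 ^ k * √√(sqInfE A / 4) + r ^ k * 1 := by
        gcongr
        · exact sum_inv_three_pow_mul_walshFourier_indE_sq_le A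
        · exact sum_nonempty_walshFourier_indE_sq_le_one A
    _ = _ := by rw [mul_one]

lemma cprob_mul_sq_le_expect_sq {B : Finset (ι → Bool)} {X : (ι → Bool) → ℝ} {δ : ℝ} (hδ : 0 ≤ δ)
    (hB : ∀ x ∈ B, δ ≤ |X x|) : cprob B * δ ^ 2 ≤ 𝔼 x, X x ^ 2 := by
  rw [cprob_eq_expect_indE, expect_mul]
  refine expect_le_expect fun x _ => ?_
  by_cases hx : x ∈ B
  · simpa [indE, hx, sq_abs] using pow_le_pow_left₀ hδ (hB x hx) 2
  · simp [indE, hx, sq_nonneg]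

lemma gauge_nonneg (ε : ℝ) (A : Finset (ι → Bool)) : 0 ≤ gauge ε A :=
  Real.sInf_nonneg fun _ hy => hy.1.le

lemma gauge_le_of_expect_sq_lt {ε δ : ℝ} {A : Finset (ι → Bool)} (hδ : 0 < δ)
    (h : 𝔼 x, (condProb ε A x - cprob A) ^ 2 < δ ^ 3) : gauge ε A ≤ δ := by
  refine csInf_le ⟨0, fun _ hy => hy.1.le⟩ ⟨hδ, lt_of_mul_lt_mul_right ?_ (sq_nonneg δ)⟩
  calc _ ≤ 𝔼 x, (condProb ε A x - cprob A) ^ 2 :=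
        cprob_mul_sq_le_expect_sq hδ.le fun x hx => (mem_filter.1 hx).2.le
    _ < δ ^ 3 := h
    _ = δ * δ ^ 2 := by ring

/-- If II(A_m) → 0 then the events A_m are asymptotically noise sensitive. -/
theorem noise_sensitive_of_sqInf_tendsto_zero
    (n : ℕ → ℕ) (A : ∀ m, Finset (Cube (n m)))
    (h : Tendsto (fun m => sqInfE (A m)) atTop (nhds 0)) :
    ∀ ε : ℝ, 0 < ε → ε < 1/2 →
      Tendsto (fun m => gauge ε (A m)) atTop (nhds 0) := by
  intro ε hε₀ hε₁
  have hr : (1 - 2 * ε) ^ 2 < 1 := by nlinarith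
  refine tendsto_order.2 ⟨fun a ha => Eventually.of_forall fun m => ha.trans_le
    (gauge_nonneg ε (A m)), fun δ hδ => ?_⟩
  obtain ⟨k, hk⟩ := exists_pow_lt_of_lt_one (pow_pos (half_pos hδ) 3) hr
  have hbound : Tendsto (fun m => 3 ^ k * √√(sqInfE (A m) / 4) + ((1 - 2 * ε) ^ 2) ^ k) atTop
      (nhds (((1 - 2 * ε) ^ 2) ^ k)) := by
    simpa using
      ((h.div_const 4).sqrt.sqrt.const_mul ((3 : ℝ) ^ k)).add_const (((1 - 2 * ε) ^ 2) ^ k)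
  filter_upwards [hbound.eventually_lt_const hk] with m hm
  exact (gauge_le_of_expect_sq_lt (half_pos hδ) ((expect_sq_condProb_sub_cprob_le hε₀.le
    (by linarith) (A m) k).trans_lt hm)).trans_lt (half_lt_self hδ)

end BKS
end

section
/- Let A_m ⊆ Ω_{n_m} be a sequence of events and set g_m = χ_{A_m}. Then the family {A_m} is uniformly stable if and only if lim_{k→∞} sup_m Σ{ ĝ_m(S)² : S ⊆ [n_m], |S| ≥ k } = 0. -/
namespace BKS

open Finset Filter

set_option linter.unusedSectionVars false
set_option maxHeartbeats 1000000

variable {ι : Type} [Fintype ι] [DecidableEq ι]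

noncomputable def chi (S : Finset ι) (x : ι → Bool) : ℝ :=
  (-1 : ℝ) ^ (S.filter fun j => x j = true).card

lemma chi_eq_prod (S : Finset ι) (x : ι → Bool) :
    chi S x = ∏ j ∈ S, (if x j then (-1:ℝ) else 1) := by
  unfold chi
  rw [Finset.prod_ite, Finset.prod_const, Finset.prod_const, one_pow, mul_one]

lemma sum_cube_prod (F : ι → Bool → ℝ) :
    ∑ x : ι → Bool, ∏ j, F j (x j) = ∏ j, (F j false + F j true) := by
  have h : ∀ j, F j false + F j true = ∑ b : Bool, F j b := by
    intro j; rw [Fintype.sum_bool]; ring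
  simp_rw [h]
  rw [Finset.prod_univ_sum, Fintype.piFinset_univ]

lemma prod_ite_mem_univ (S : Finset ι) (f : ι → ℝ) :
    ∏ j : ι, (if j ∈ S then f j else 1) = ∏ j ∈ S, f j := by
  rw [Finset.prod_ite_mem, Finset.univ_inter]

lemma sum_noiseKernel (ε : ℝ) (x : ι → Bool) :
    ∑ y : ι → Bool, noiseKernel ε x y = 1 := by
  unfold noiseKernel
  have h := sum_cube_prod (ι := ι) (fun j b => if b = x j then 1 - ε else ε)
  rw [h]
  apply Finset.prod_eq_one
  intro j _
  cases hx : x j <;> simp <;> ring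

lemma noiseKernel_symm (ε : ℝ) (x y : ι → Bool) :
    noiseKernel ε x y = noiseKernel ε y x := by
  unfold noiseKernel
  apply Finset.prod_congr rfl
  intro j _
  rcases eq_or_ne (y j) (x j) with h | h
  · rw [if_pos h, if_pos h.symm]
  · rw [if_neg h, if_neg (Ne.symm h)]

lemma sum_kernel_chi (ε : ℝ) (S : Finset ι) (x : ι → Bool) :
    ∑ y : ι → Bool, noiseKernel ε x y * chi S y
      = (1 - 2*ε) ^ S.card * chi S x := by
  have key : ∀ y : ι → Bool, noiseKernel ε x y * chi S y
      = ∏ j : ι, (fun j b => (if b = x j then 1 - ε else ε) *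
          (if j ∈ S then (if b then (-1:ℝ) else 1) else 1)) j (y j) := by
    intro y
    rw [chi_eq_prod, ← prod_ite_mem_univ S (fun j => if y j then (-1:ℝ) else 1)]
    unfold noiseKernel
    rw [← Finset.prod_mul_distrib]
  simp_rw [key]
  have hs := sum_cube_prod (ι := ι) (fun j b => (if b = x j then 1 - ε else ε) *
          (if j ∈ S then (if b then (-1:ℝ) else 1) else 1))
  simp only at hs
  rw [hs]
  have rhs : (1 - 2*ε) ^ S.card * chi S x
      = ∏ j : ι, (if j ∈ S then (1 - 2*ε) * (if x j then (-1:ℝ) else 1) else 1) := by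
    rw [Finset.prod_ite_mem, Finset.univ_inter, Finset.prod_mul_distrib,
      Finset.prod_const, ← chi_eq_prod]
  rw [rhs]
  apply Finset.prod_congr rfl
  intro j _
  by_cases hj : j ∈ S <;> cases hx : x j <;> simp [hj, hx] <;> ring

lemma sum_chi_mul_chi (x y : ι → Bool) :
    ∑ S : Finset ι, chi S x * chi S y
      = if x = y then (2:ℝ) ^ Fintype.card ι else 0 := by
  have h1 : ∀ S : Finset ι, chi S x * chi S y
      = ∏ j ∈ S, ((if x j then (-1:ℝ) else 1) * (if y j then (-1:ℝ) else 1)) := by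
    intro S; rw [chi_eq_prod, chi_eq_prod, Finset.prod_mul_distrib]
  simp_rw [h1]
  have h2 : (∑ S : Finset ι, ∏ j ∈ S,
      ((if x j then (-1:ℝ) else 1) * (if y j then (-1:ℝ) else 1)))
      = ∏ j : ι, (((if x j then (-1:ℝ) else 1) * (if y j then (-1:ℝ) else 1)) + 1) := by
    rw [Finset.prod_add]
    rw [← Finset.powerset_univ]
    apply Finset.sum_congr rfl
    intro S _
    simp
  rw [h2]
  by_cases hxy : x = y
  · subst hxy
    rw [if_pos rfl]
    have : ∀ j : ι, ((if x j then (-1:ℝ) else 1) * (if x j then (-1:ℝ) else 1)) + 1 = 2 := by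
      intro j; cases h : x j <;> norm_num [h]
    simp_rw [this]
    rw [Finset.prod_const, Finset.card_univ]
  · rw [if_neg hxy]
    obtain ⟨j, hj⟩ : ∃ j, x j ≠ y j := by
      by_contra h
      push_neg at h
      exact hxy (funext h)
    apply Finset.prod_eq_zero (Finset.mem_univ j)
    cases h1 : x j <;> cases h2 : y j <;> simp [h1, h2] at hj ⊢


lemma walshFourier_eq (f : (ι → Bool) → ℝ) (S : Finset ι) :
    walshFourier f S = cexpect fun x => f x * chi S x := rfl

lemma two_pow_pos : (0:ℝ) < 2 ^ Fintype.card ι := by positivity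

lemma fourier_expansion (f : (ι → Bool) → ℝ) (x : ι → Bool) :
    f x = ∑ S : Finset ι, walshFourier f S * chi S x := by
  have h2 := two_pow_pos (ι := ι)
  simp only [walshFourier_eq, cexpect, div_mul_eq_mul_div, Finset.sum_mul]
  rw [← Finset.sum_div, Finset.sum_comm]
  have h : ∀ y : ι → Bool, ∑ S : Finset ι, f y * chi S y * chi S x
      = if y = x then f y * (2:ℝ) ^ Fintype.card ι else 0 := by
    intro y
    have : ∑ S : Finset ι, f y * chi S y * chi S x
        = f y * ∑ S : Finset ι, chi S y * chi S x := by
      rw [Finset.mul_sum]; simp_rw [mul_assoc]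
    rw [this, sum_chi_mul_chi, mul_ite, mul_zero]
  simp_rw [h]
  rw [Finset.sum_ite_eq' Finset.univ x (fun y => f y * (2:ℝ) ^ Fintype.card ι),
    if_pos (Finset.mem_univ x), mul_div_cancel_right₀ _ h2.ne']

lemma cexpect_mul_chi_sum (f : (ι → Bool) → ℝ) (c : Finset ι → ℝ) :
    cexpect (fun x => f x * ∑ S : Finset ι, c S * chi S x)
      = ∑ S : Finset ι, c S * walshFourier f S := by
  rw [cexpect]
  simp_rw [Finset.mul_sum]
  rw [Finset.sum_comm, Finset.sum_div]
  apply Finset.sum_congr rfl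
  intro S _
  rw [walshFourier_eq, cexpect, ← mul_div_assoc]
  congr 1
  rw [Finset.mul_sum]
  apply Finset.sum_congr rfl
  intro x _
  ring

lemma Qop_expansion (ε : ℝ) (f : (ι → Bool) → ℝ) (x : ι → Bool) :
    Qop ε f x = ∑ S : Finset ι, (walshFourier f S * (1 - 2*ε) ^ S.card) * chi S x := by
  unfold Qop
  have h : ∀ y : ι → Bool, noiseKernel ε x y * f y
      = ∑ S : Finset ι, walshFourier f S * (noiseKernel ε x y * chi S y) := by
    intro y
    calc noiseKernel ε x y * f y
        = noiseKernel ε x y * ∑ S : Finset ι, walshFourier f S * chi S y := by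
          rw [← fourier_expansion]
      _ = ∑ S : Finset ι, walshFourier f S * (noiseKernel ε x y * chi S y) := by
          rw [Finset.mul_sum]; apply Finset.sum_congr rfl; intros; ring
  simp_rw [h]
  rw [Finset.sum_comm]
  apply Finset.sum_congr rfl
  intro S _
  rw [← Finset.mul_sum, sum_kernel_chi]
  ring

lemma cexpect_mul_Qop (ε : ℝ) (f : (ι → Bool) → ℝ) :
    cexpect (fun x => f x * Qop ε f x)
      = ∑ S : Finset ι, (walshFourier f S) ^ 2 * (1 - 2*ε) ^ S.card := by
  have h : (fun x => f x * Qop ε f x)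
      = fun x => f x * ∑ S : Finset ι, (walshFourier f S * (1 - 2*ε) ^ S.card) * chi S x := by
    funext x; rw [Qop_expansion]
  rw [h, cexpect_mul_chi_sum]
  apply Finset.sum_congr rfl
  intro S _
  ring

lemma parseval (f : (ι → Bool) → ℝ) :
    cexpect (fun x => f x * f x) = ∑ S : Finset ι, (walshFourier f S) ^ 2 := by
  have h : (fun x => f x * f x)
      = fun x => f x * ∑ S : Finset ι, walshFourier f S * chi S x := by
    funext x; rw [← fourier_expansion]
  rw [h, cexpect_mul_chi_sum]
  apply Finset.sum_congr rfl
  intro S _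
  ring

lemma cexpect_indE (A : Finset (ι → Bool)) : cexpect (indE A) = cprob A := by
  unfold cexpect indE cprob
  congr 1
  rw [Finset.sum_boole]
  congr 1
  simp [Finset.filter_mem_eq_inter]

lemma indE_mul_self (A : Finset (ι → Bool)) (x : ι → Bool) :
    indE A x * indE A x = indE A x := by
  unfold indE; by_cases h : x ∈ A <;> simp [h]

lemma sum_sq_walsh (A : Finset (ι → Bool)) :
    ∑ S : Finset ι, (walshFourier (indE A) S) ^ 2 = cprob A := by
  rw [← parseval]
  rw [show (fun x => indE A x * indE A x) = indE A from funext (indE_mul_self A)]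
  exact cexpect_indE A

lemma cexpect_Qop (ε : ℝ) (f : (ι → Bool) → ℝ) :
    cexpect (Qop ε f) = cexpect f := by
  unfold cexpect Qop
  congr 1
  rw [Finset.sum_comm]
  apply Finset.sum_congr rfl
  intro y _
  have h : ∀ x : ι → Bool, noiseKernel ε x y = noiseKernel ε y x :=
    fun x => noiseKernel_symm ε x y
  simp_rw [h]
  rw [← Finset.sum_mul, sum_noiseKernel, one_mul]

lemma probSymmDiff_eq (ε : ℝ) (A : Finset (ι → Bool)) :
    probSymmDiff ε A
      = 2 * ∑ S : Finset ι, (walshFourier (indE A) S) ^ 2 * (1 - (1 - 2*ε) ^ S.card) := by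
  set g := indE A with hg
  have hpt : ∀ x : ι → Bool, (∑ y : ι → Bool, noiseKernel ε x y *
      (if (x ∈ A) ↔ (y ∈ A) then 0 else 1))
      = g x - 2 * (g x * Qop ε g x) + Qop ε g x := by
    intro x
    have h1 : ∀ y : ι → Bool, noiseKernel ε x y * (if (x ∈ A) ↔ (y ∈ A) then (0:ℝ) else 1)
        = noiseKernel ε x y * g x - 2 * (g x * (noiseKernel ε x y * g y))
          + noiseKernel ε x y * g y := by
      intro y
      by_cases hx : x ∈ A <;> by_cases hy : y ∈ A <;>
        simp [hg, indE, hx, hy] <;> ring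
    simp_rw [h1]
    rw [Finset.sum_add_distrib, Finset.sum_sub_distrib, ← Finset.sum_mul, sum_noiseKernel,
      one_mul, ← Finset.mul_sum, ← Finset.mul_sum]
    rfl
  unfold probSymmDiff
  simp_rw [hpt]
  have hlin : cexpect (fun x => g x - 2 * (g x * Qop ε g x) + Qop ε g x)
      = cexpect g - 2 * cexpect (fun x => g x * Qop ε g x) + cexpect (Qop ε g) := by
    unfold cexpect
    rw [Finset.sum_add_distrib, Finset.sum_sub_distrib, ← Finset.mul_sum]
    ring
  rw [hlin, cexpect_Qop, cexpect_indE, cexpect_mul_Qop]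
  have hA : ∑ S : Finset ι, (walshFourier g S) ^ 2 = cprob A := by
    rw [hg]; exact sum_sq_walsh A
  have hsplit : ∑ S : Finset ι, (walshFourier g S) ^ 2 * (1 - (1 - 2*ε) ^ S.card)
      = (∑ S : Finset ι, (walshFourier g S) ^ 2)
        - ∑ S : Finset ι, (walshFourier g S) ^ 2 * (1 - 2*ε) ^ S.card := by
    rw [← Finset.sum_sub_distrib]
    apply Finset.sum_congr rfl
    intros; ring
  rw [hsplit, hA]
  ring

lemma cprob_le_one (A : Finset (ι → Bool)) : cprob A ≤ 1 := by
  unfold cprob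
  rw [div_le_one two_pow_pos]
  have h := Finset.card_le_univ A
  calc (A.card : ℝ) ≤ (Finset.univ : Finset (ι → Bool)).card := by exact_mod_cast h
    _ = 2 ^ Fintype.card ι := by
        rw [Finset.card_univ, Fintype.card_fun]
        norm_num

lemma highW_nonneg (A : Finset (ι → Bool)) (k : ℕ) :
    0 ≤ ∑ S ∈ Finset.univ.filter (fun S : Finset ι => k ≤ S.card),
        (walshFourier (indE A) S) ^ 2 :=
  Finset.sum_nonneg fun S _ => sq_nonneg _

lemma highW_le_one (A : Finset (ι → Bool)) (k : ℕ) :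
    ∑ S ∈ Finset.univ.filter (fun S : Finset ι => k ≤ S.card),
        (walshFourier (indE A) S) ^ 2 ≤ 1 := by
  calc ∑ S ∈ Finset.univ.filter (fun S : Finset ι => k ≤ S.card),
          (walshFourier (indE A) S) ^ 2
      ≤ ∑ S : Finset ι, (walshFourier (indE A) S) ^ 2 :=
        Finset.sum_le_sum_of_subset_of_nonneg (Finset.filter_subset _ _)
          (fun S _ _ => sq_nonneg _)
    _ = cprob A := sum_sq_walsh A
    _ ≤ 1 := cprob_le_one A

lemma highW_anti (A : Finset (ι → Bool)) {k k' : ℕ} (h : k ≤ k') :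
    ∑ S ∈ Finset.univ.filter (fun S : Finset ι => k' ≤ S.card),
        (walshFourier (indE A) S) ^ 2
    ≤ ∑ S ∈ Finset.univ.filter (fun S : Finset ι => k ≤ S.card),
        (walshFourier (indE A) S) ^ 2 := by
  apply Finset.sum_le_sum_of_subset_of_nonneg
  · intro S hS
    rw [Finset.mem_filter] at hS ⊢
    exact ⟨hS.1, le_trans h hS.2⟩
  · exact fun S _ _ => sq_nonneg _

lemma lower_bound (ε : ℝ) (hε0 : 0 ≤ ε) (hε1 : ε ≤ 1/2) (k : ℕ) (A : Finset (ι → Bool)) :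
    2 * ((1 - (1 - 2*ε) ^ k) *
      ∑ S ∈ Finset.univ.filter (fun S : Finset ι => k ≤ S.card),
        (walshFourier (indE A) S) ^ 2)
    ≤ probSymmDiff ε A := by
  have hρ0 : (0:ℝ) ≤ 1 - 2*ε := by linarith
  have hρ1 : (1:ℝ) - 2*ε ≤ 1 := by linarith
  rw [probSymmDiff_eq]
  have h1 : (1 - (1 - 2*ε) ^ k) *
      ∑ S ∈ Finset.univ.filter (fun S : Finset ι => k ≤ S.card),
        (walshFourier (indE A) S) ^ 2
      ≤ ∑ S ∈ Finset.univ.filter (fun S : Finset ι => k ≤ S.card),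
        (walshFourier (indE A) S) ^ 2 * (1 - (1 - 2*ε) ^ S.card) := by
    rw [Finset.mul_sum]
    apply Finset.sum_le_sum
    intro S hS
    rw [Finset.mem_filter] at hS
    rw [mul_comm]
    apply mul_le_mul_of_nonneg_left _ (sq_nonneg _)
    have := pow_le_pow_of_le_one hρ0 hρ1 hS.2
    linarith
  have h2 : ∑ S ∈ Finset.univ.filter (fun S : Finset ι => k ≤ S.card),
        (walshFourier (indE A) S) ^ 2 * (1 - (1 - 2*ε) ^ S.card)
      ≤ ∑ S : Finset ι, (walshFourier (indE A) S) ^ 2 * (1 - (1 - 2*ε) ^ S.card) := by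
    apply Finset.sum_le_sum_of_subset_of_nonneg (Finset.filter_subset _ _)
    intro S _ _
    have h3 : (1 - 2*ε) ^ S.card ≤ 1 := pow_le_one₀ hρ0 hρ1
    have := sq_nonneg (walshFourier (indE A) S)
    nlinarith
  linarith

lemma upper_bound (ε : ℝ) (hε0 : 0 ≤ ε) (hε1 : ε ≤ 1/2) (k : ℕ) (A : Finset (ι → Bool)) :
    probSymmDiff ε A ≤ 4*ε*k + 2 *
      ∑ S ∈ Finset.univ.filter (fun S : Finset ι => k ≤ S.card),
        (walshFourier (indE A) S) ^ 2 := by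
  have hρ0 : (0:ℝ) ≤ 1 - 2*ε := by linarith
  have hρ1 : (1:ℝ) - 2*ε ≤ 1 := by linarith
  rw [probSymmDiff_eq]
  rw [← Finset.sum_filter_add_sum_filter_not Finset.univ (fun S : Finset ι => k ≤ S.card)
    (fun S => (walshFourier (indE A) S) ^ 2 * (1 - (1 - 2*ε) ^ S.card))]
  have hb : ∀ S : Finset ι, ¬ (k ≤ S.card) → (1:ℝ) - (1 - 2*ε) ^ S.card ≤ 2*ε*k := by
    intro S hS
    push_neg at hS
    have hmono : (1 - 2*ε) ^ k ≤ (1 - 2*ε) ^ S.card :=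
      pow_le_pow_of_le_one hρ0 hρ1 hS.le
    have hber : 1 + (k:ℝ) * (-(2*ε)) ≤ (1 + -(2*ε)) ^ k :=
      one_add_mul_le_pow (by linarith) k
    have : (1:ℝ) - 2*ε*k ≤ (1 - 2*ε) ^ k := by
      calc (1:ℝ) - 2*ε*k = 1 + (k:ℝ) * (-(2*ε)) := by ring
        _ ≤ (1 + -(2*ε)) ^ k := hber
        _ = (1 - 2*ε) ^ k := by ring_nf
    linarith
  have hpart1 : ∑ S ∈ Finset.univ.filter (fun S : Finset ι => k ≤ S.card),
        (walshFourier (indE A) S) ^ 2 * (1 - (1 - 2*ε) ^ S.card)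
      ≤ ∑ S ∈ Finset.univ.filter (fun S : Finset ι => k ≤ S.card),
        (walshFourier (indE A) S) ^ 2 := by
    apply Finset.sum_le_sum
    intro S _
    have h3 : (0:ℝ) ≤ (1 - 2*ε) ^ S.card := pow_nonneg hρ0 _
    nlinarith [sq_nonneg (walshFourier (indE A) S)]
  have hpart2 : ∑ S ∈ Finset.univ.filter (fun S : Finset ι => ¬ (k ≤ S.card)),
        (walshFourier (indE A) S) ^ 2 * (1 - (1 - 2*ε) ^ S.card)
      ≤ 2*ε*k := by
    calc ∑ S ∈ Finset.univ.filter (fun S : Finset ι => ¬ (k ≤ S.card)),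
          (walshFourier (indE A) S) ^ 2 * (1 - (1 - 2*ε) ^ S.card)
        ≤ ∑ S ∈ Finset.univ.filter (fun S : Finset ι => ¬ (k ≤ S.card)),
          (walshFourier (indE A) S) ^ 2 * (2*ε*k) := by
          apply Finset.sum_le_sum
          intro S hS
          rw [Finset.mem_filter] at hS
          exact mul_le_mul_of_nonneg_left (hb S hS.2) (sq_nonneg _)
      _ = (∑ S ∈ Finset.univ.filter (fun S : Finset ι => ¬ (k ≤ S.card)),
          (walshFourier (indE A) S) ^ 2) * (2*ε*k) := by rw [Finset.sum_mul]
      _ ≤ 1 * (2*ε*k) := by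
          apply mul_le_mul_of_nonneg_right _ (by positivity)
          calc ∑ S ∈ Finset.univ.filter (fun S : Finset ι => ¬ (k ≤ S.card)),
                (walshFourier (indE A) S) ^ 2
              ≤ ∑ S : Finset ι, (walshFourier (indE A) S) ^ 2 :=
                Finset.sum_le_sum_of_subset_of_nonneg (Finset.filter_subset _ _)
                  (fun S _ _ => sq_nonneg _)
            _ = cprob A := sum_sq_walsh A
            _ ≤ 1 := cprob_le_one A
      _ = 2*ε*k := one_mul _
  linarith

/-- Uniform stability is equivalent to the uniform vanishing of the
high-frequency Fourier weight. -/
theorem uniformly_stable_iff_high_fourier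
    (n : ℕ → ℕ) (A : ∀ m, Finset (Cube (n m))) :
    (∀ η : ℝ, 0 < η → ∃ ε₀ : ℝ, 0 < ε₀ ∧ ∀ ε : ℝ, 0 < ε → ε < ε₀ → ∀ m,
        probSymmDiff ε (A m) < η) ↔
    Tendsto (fun k : ℕ => ⨆ m : ℕ,
        ∑ S ∈ Finset.univ.filter
            (fun S : Finset (Fin (n m)) => k ≤ S.card),
          (walshFourier (indE (A m)) S) ^ 2) atTop (nhds 0) := by
  set W : ℕ → ℕ → ℝ := fun m k =>
    ∑ S ∈ Finset.univ.filter (fun S : Finset (Fin (n m)) => k ≤ S.card),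
      (walshFourier (indE (A m)) S) ^ 2 with hWdef
  have hfun : (fun k : ℕ => ⨆ m : ℕ,
      ∑ S ∈ Finset.univ.filter (fun S : Finset (Fin (n m)) => k ≤ S.card),
        (walshFourier (indE (A m)) S) ^ 2) = fun k => ⨆ m, W m k := rfl
  rw [hfun]
  have hW0 : ∀ m k, 0 ≤ W m k := fun m k => highW_nonneg _ _
  have hW1 : ∀ m k, W m k ≤ 1 := fun m k => highW_le_one _ _
  have hbdd : ∀ k, BddAbove (Set.range fun m => W m k) := by
    intro k
    exact ⟨1, by rintro _ ⟨m, rfl⟩; exact hW1 m k⟩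
  have ha0 : ∀ k, 0 ≤ ⨆ m, W m k := fun k => Real.iSup_nonneg (fun m => hW0 m k)
  constructor
  · intro hstab
    rw [Metric.tendsto_atTop]
    intro η hη
    obtain ⟨ε₀, hε₀pos, hst⟩ := hstab (η/2) (by linarith)
    set ε := min (ε₀/2) (1/4) with hε
    have hεpos : 0 < ε := lt_min (by linarith) (by norm_num)
    have hεlt : ε < ε₀ := lt_of_le_of_lt (min_le_left _ _) (by linarith)
    have hεle : ε ≤ 1/2 := le_trans (min_le_right _ _) (by norm_num)
    have hρ1 : 1 - 2*ε < 1 := by linarith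
    obtain ⟨K, hK⟩ := exists_pow_lt_of_lt_one (show (0:ℝ) < 1/2 by norm_num) hρ1
    refine ⟨K, fun k hk => ?_⟩
    have hak : (⨆ m, W m k) ≤ ⨆ m, W m K :=
      ciSup_mono (hbdd K) (fun m => highW_anti _ hk)
    have haK : (⨆ m, W m K) ≤ η/2 := by
      apply ciSup_le
      intro m
      have hlb : 2 * ((1 - (1 - 2*ε) ^ K) * W m K) ≤ probSymmDiff ε (A m) :=
        lower_bound ε hεpos.le hεle K (A m)
      have hps : probSymmDiff ε (A m) < η/2 := hst ε hεpos hεlt m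
      nlinarith [hW0 m K, mul_nonneg (hW0 m K)
        (show (0:ℝ) ≤ 1 - 2*(1 - 2*ε)^K by linarith)]
    rw [Real.dist_eq, sub_zero, abs_of_nonneg (ha0 k)]
    linarith
  · intro htend
    rw [Metric.tendsto_atTop] at htend
    intro η hη
    obtain ⟨K, hK⟩ := htend (η/4) (by linarith)
    have haK : (⨆ m, W m K) < η/4 := by
      have h := hK K le_rfl
      rw [Real.dist_eq, sub_zero, abs_of_nonneg (ha0 K)] at h
      exact h
    refine ⟨min (1/2) (η/(8*((K:ℝ)+1))), lt_min (by norm_num) (by positivity), ?_⟩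
    intro ε hεpos hεlt m
    have hεle : ε ≤ 1/2 := le_of_lt (lt_of_lt_of_le hεlt (min_le_left _ _))
    have hεlt2 : ε < η/(8*((K:ℝ)+1)) := lt_of_lt_of_le hεlt (min_le_right _ _)
    have hub : probSymmDiff ε (A m) ≤ 4*ε*K + 2 * W m K :=
      upper_bound ε hεpos.le hεle K (A m)
    have hWa : W m K ≤ ⨆ m', W m' K := le_ciSup (hbdd K) m
    have hK1 : (0:ℝ) < (K:ℝ)+1 := by positivity
    have h4 : 4*ε*(K:ℝ) < η/2 := by
      have h8 : ε * (8*((K:ℝ)+1)) < η := (lt_div_iff₀ (by positivity)).mp hεlt2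
      nlinarith [hεpos]
    calc probSymmDiff ε (A m) ≤ 4*ε*(K:ℝ) + 2 * W m K := hub
      _ < η/2 + 2 * (η/4) := by
          have : W m K < η/4 := lt_of_le_of_lt hWa haK
          linarith
      _ = η := by ring

end BKS
end
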